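/- arXiv:2212.12328 — 2 statements merged into one kernel-verified Lean document; each statement's English description precedes it below -/
import Mathlib

section
/- Let 𝒯 be the linear system spanned by k linearly independent degree-d forms f_1,…,f_k in x_0,…,x_n over ℂ, let a ∈ ℤ^{n+1} be a normalized one-parameter subgroup, and let g_1,…,g_k be linearly independent members of 𝒯. Then for every i one has 0 ≤ ω(g_i,a) ≤ Σ_{l=1}^{k} ω(g_l,a) ≤ ω(𝒯,a). -/
noncomputable section

open Finset MvPolynomial

/-- The pairing `⟨I,a⟩ = Σ_j I_j·a_j` of an exponent vector with a one-parameter subgroup. -/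
def pairing (n : ℕ) (I : Fin (n+1) →₀ ℕ) (a : Fin (n+1) → ℤ) : ℤ :=
  ∑ j, (I j : ℤ) * a j

/-- The affine weight `w_a(I) = Σ_{j=0}^{n-1} I_j·(a_j − a_n)` of an exponent vector. -/
def wt (n : ℕ) (a : Fin (n+1) → ℤ) (I : Fin (n+1) →₀ ℕ) : ℤ :=
  ∑ j : Fin n, (I j.castSucc : ℤ) * (a j.castSucc - a (Fin.last n))

/-- `C(a) = Σ_{j=0}^{n-1} a_j − n·a_n`. -/
def Cwt (n : ℕ) (a : Fin (n+1) → ℤ) : ℤ :=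
  (∑ j : Fin n, a j.castSucc) - (n : ℤ) * a (Fin.last n)

/-- A normalized one-parameter subgroup: `a_0 ≥ a_1 ≥ … ≥ a_n` and `Σ_i a_i = 0`. -/
def Normalized (n : ℕ) (a : Fin (n+1) → ℤ) : Prop :=
  Antitone a ∧ ∑ i, a i = 0

/-- `S` is in the Plücker support of the linear system spanned by `f`: `S` is a `k`-element
set of degree-`d` exponent vectors such that the `k×k` matrix whose `(i,I)` entry is the
coefficient of `f i` at the monomial `I ∈ S` has nonzero determinant. -/
def InPlucker (n d k : ℕ) (f : Fin k → MvPolynomial (Fin (n+1)) ℂ)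
    (S : Finset (Fin (n+1) →₀ ℕ)) : Prop :=
  (∀ I ∈ S, (∑ j, I j) = d) ∧
  ∃ h : S.card = k,
    Matrix.det (Matrix.of fun i j : Fin k =>
      MvPolynomial.coeff ((S.equivFin.symm (Fin.cast h.symm j)).1) (f i)) ≠ 0

/-- The affine weight `ω(𝒯,a)` of a linear system: the minimum over the Plücker support of
`Σ_{I∈S} w_a(I)`. -/
def omegaT (n d k : ℕ) (a : Fin (n+1) → ℤ) (f : Fin k → MvPolynomial (Fin (n+1)) ℂ) : ℤ :=
  sInf {x : ℤ | ∃ S : Finset (Fin (n+1) →₀ ℕ), InPlucker n d k f S ∧ x = ∑ I ∈ S, wt n a I}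

/-- The Hilbert–Mumford weight `μ(𝒯,a)`: minus the minimum over the Plücker support of
`Σ_{I∈S} ⟨I,a⟩`. -/
def muT (n d k : ℕ) (a : Fin (n+1) → ℤ) (f : Fin k → MvPolynomial (Fin (n+1)) ℂ) : ℤ :=
  - sInf {x : ℤ | ∃ S : Finset (Fin (n+1) →₀ ℕ), InPlucker n d k f S ∧ x = ∑ I ∈ S, pairing n I a}

/-- The affine weight `ω(g,a) = min_{I ∈ Supp(g)} w_a(I)` of a nonzero form. -/
def omegaF (n : ℕ) (a : Fin (n+1) → ℤ) (g : MvPolynomial (Fin (n+1)) ℂ) : ℤ :=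
  sInf {x : ℤ | ∃ I ∈ g.support, x = wt n a I}

/-- The Hilbert–Mumford weight `μ(g,a) = −min_{I ∈ Supp(g)} ⟨I,a⟩` of a nonzero form. -/
def muF (n : ℕ) (a : Fin (n+1) → ℤ) (g : MvPolynomial (Fin (n+1)) ℂ) : ℤ :=
  - sInf {x : ℤ | ∃ I ∈ g.support, x = pairing n I a}

/-- The affine weight `ω(h,a) = min{ a_j − a_n : h_j ≠ 0 }` of a nonzero linear form given by
its coefficient vector `h`. -/
def omegaH (n : ℕ) (a : Fin (n+1) → ℤ) (h : Fin (n+1) → ℂ) : ℤ :=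
  sInf {x : ℤ | ∃ j, h j ≠ 0 ∧ x = a j - a (Fin.last n)}

/-- The Hilbert–Mumford weight `μ(h,a) = −min{ a_j : h_j ≠ 0 }` of a nonzero linear form. -/
def muH (n : ℕ) (a : Fin (n+1) → ℤ) (h : Fin (n+1) → ℂ) : ℤ :=
  - sInf {x : ℤ | ∃ j, h j ≠ 0 ∧ x = a j}

/-- The action of `A ∈ SL(n+1,ℂ)` on forms: `(A·g)(x) = g(Ax)`. -/
def actSL (n : ℕ) (A : Matrix.SpecialLinearGroup (Fin (n+1)) ℂ)
    (g : MvPolynomial (Fin (n+1)) ℂ) : MvPolynomial (Fin (n+1)) ℂ :=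
  MvPolynomial.aeval
    (fun i => ∑ j, MvPolynomial.C ((A : Matrix (Fin (n+1)) (Fin (n+1)) ℂ) i j)
      * MvPolynomial.X j) g

/-- A nonzero degree-`d` form is semistable if `ω(A·g,a) ≤ (d/(n+1))·C(a)` for every
`A ∈ SL(n+1,ℂ)` and every nontrivial normalized one-parameter subgroup `a`. -/
def FormSemistable (n d : ℕ) (g : MvPolynomial (Fin (n+1)) ℂ) : Prop :=
  ∀ A : Matrix.SpecialLinearGroup (Fin (n+1)) ℂ, ∀ a : Fin (n+1) → ℤ,
    Normalized n a → a ≠ 0 →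
      (omegaF n a (actSL n A g) : ℚ) ≤ (d : ℚ) / (n + 1) * (Cwt n a : ℚ)

/-- A nonzero degree-`d` form is stable if `ω(A·g,a) < (d/(n+1))·C(a)` for every
`A ∈ SL(n+1,ℂ)` and every nontrivial normalized one-parameter subgroup `a`. -/
def FormStable (n d : ℕ) (g : MvPolynomial (Fin (n+1)) ℂ) : Prop :=
  ∀ A : Matrix.SpecialLinearGroup (Fin (n+1)) ℂ, ∀ a : Fin (n+1) → ℤ,
    Normalized n a → a ≠ 0 →
      (omegaF n a (actSL n A g) : ℚ) < (d : ℚ) / (n + 1) * (Cwt n a : ℚ)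

/-- A linear system spanned by `f` is semistable if `ω(A·𝒯,a) ≤ (k·d/(n+1))·C(a)` for every
`A ∈ SL(n+1,ℂ)` and every nontrivial normalized one-parameter subgroup `a`. -/
def TupleSemistable (n d k : ℕ) (f : Fin k → MvPolynomial (Fin (n+1)) ℂ) : Prop :=
  ∀ A : Matrix.SpecialLinearGroup (Fin (n+1)) ℂ, ∀ a : Fin (n+1) → ℤ,
    Normalized n a → a ≠ 0 →
      (omegaT n d k a (fun i => actSL n A (f i)) : ℚ) ≤
        (k : ℚ) * d / (n + 1) * (Cwt n a : ℚ)

/-- A linear system spanned by `f` is stable if `ω(A·𝒯,a) < (k·d/(n+1))·C(a)` for every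
`A ∈ SL(n+1,ℂ)` and every nontrivial normalized one-parameter subgroup `a`. -/
def TupleStable (n d k : ℕ) (f : Fin k → MvPolynomial (Fin (n+1)) ℂ) : Prop :=
  ∀ A : Matrix.SpecialLinearGroup (Fin (n+1)) ℂ, ∀ a : Fin (n+1) → ℤ,
    Normalized n a → a ≠ 0 →
      (omegaT n d k a (fun i => actSL n A (f i)) : ℚ) <
        (k : ℚ) * d / (n + 1) * (Cwt n a : ℚ)

section AuxLemmas
open Matrix

lemma wt_nonneg' {n : ℕ} {a : Fin (n+1) → ℤ} (ha : Antitone a) (I : Fin (n+1) →₀ ℕ) :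
    0 ≤ wt n a I :=
  Finset.sum_nonneg fun j _ => mul_nonneg (Int.natCast_nonneg _)
    (sub_nonneg.2 (ha (Fin.le_last _)))

lemma omegaF_bdd {n : ℕ} {a : Fin (n+1) → ℤ} (ha : Antitone a)
    (g : MvPolynomial (Fin (n+1)) ℂ) :
    BddBelow {x : ℤ | ∃ I ∈ g.support, x = wt n a I} :=
  ⟨0, by rintro x ⟨I, -, rfl⟩; exact wt_nonneg' ha I⟩

lemma omegaF_le' {n : ℕ} {a : Fin (n+1) → ℤ} (ha : Antitone a)
    {g : MvPolynomial (Fin (n+1)) ℂ} {I : Fin (n+1) →₀ ℕ} (hI : I ∈ g.support) :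
    omegaF n a g ≤ wt n a I :=
  csInf_le (omegaF_bdd ha g) ⟨I, hI, rfl⟩

lemma omegaF_nonneg' {n : ℕ} {a : Fin (n+1) → ℤ} (ha : Antitone a)
    {g : MvPolynomial (Fin (n+1)) ℂ} (hg : g ≠ 0) :
    0 ≤ omegaF n a g := by
  obtain ⟨I, hI⟩ := MvPolynomial.support_nonempty.2 hg
  exact le_csInf ⟨wt n a I, I, hI, rfl⟩ (by rintro x ⟨J, -, rfl⟩; exact wt_nonneg' ha J)

lemma det_ne_zero_of_cols {n k : ℕ} (S : Finset (Fin (n+1) →₀ ℕ)) (h : S.card = k)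
    (f : Fin k → MvPolynomial (Fin (n+1)) ℂ)
    (hcols : LinearIndependent ℂ (fun I : S => fun i => MvPolynomial.coeff I.1 (f i))) :
    Matrix.det (Matrix.of fun i j : Fin k =>
      MvPolynomial.coeff ((S.equivFin.symm (Fin.cast h.symm j)).1) (f i)) ≠ 0 := by
  set e : Fin k ≃ S := (finCongr h.symm).trans S.equivFin.symm with he
  set P : Matrix (Fin k) (Fin k) ℂ :=
    Matrix.of fun i j : Fin k =>
      MvPolynomial.coeff ((S.equivFin.symm (Fin.cast h.symm j)).1) (f i) with hP
  have hind : LinearIndependent ℂ (fun j : Fin k => Pᵀ j) := by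
    have h2 := (linearIndependent_equiv e).2 hcols
    have : (fun j : Fin k => Pᵀ j) = (fun I : S => fun i => MvPolynomial.coeff I.1 (f i)) ∘ e := by
      funext j
      ext i
      rfl
    rw [this]
    exact h2
  have hunit : IsUnit P := Matrix.linearIndependent_cols_iff_isUnit.1 hind
  exact ((Matrix.isUnit_iff_isUnit_det P).1 hunit).ne_zero

lemma exists_inPlucker (n d k : ℕ) (f : Fin k → MvPolynomial (Fin (n+1)) ℂ)
    (hhom : ∀ i, (f i).IsHomogeneous d) (hind : LinearIndependent ℂ f) :
    ∃ S, InPlucker n d k f S := by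
  classical
  set T : Finset (Fin (n+1) →₀ ℕ) := Finset.univ.biUnion (fun i => (f i).support) with hT
  set M : Matrix (Fin k) T ℂ := Matrix.of (fun i I => MvPolynomial.coeff I.1 (f i)) with hM
  have hrows : LinearIndependent ℂ (fun i => M i) := by
    rw [Fintype.linearIndependent_iff]
    intro c hc
    refine Fintype.linearIndependent_iff.1 hind c ?_
    apply MvPolynomial.ext
    intro I
    rw [MvPolynomial.coeff_sum, MvPolynomial.coeff_zero]
    by_cases hI : I ∈ T
    · have := congrFun hc ⟨I, hI⟩
      simpa [M, MvPolynomial.coeff_smul] using this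
    · refine Finset.sum_eq_zero fun i _ => ?_
      have hns : I ∉ (f i).support := fun hmem =>
        hI (Finset.mem_biUnion.2 ⟨i, Finset.mem_univ i, hmem⟩)
      rw [MvPolynomial.coeff_smul, MvPolynomial.notMem_support_iff.1 hns, smul_zero]
  have hMTinj : Function.Injective Mᵀ.mulVec := by
    rw [Matrix.mulVec_injective_iff]
    exact hrows
  have hrankT : Mᵀ.rank = k := by
    rw [Matrix.rank]
    rw [LinearMap.finrank_range_of_inj hMTinj]
    exact Module.finrank_fin_fun ℂ
  have hrank : M.rank = k := by rw [← Matrix.rank_transpose]; exact hrankT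
  have hspan : Submodule.span ℂ (Set.range Mᵀ) = ⊤ := by
    apply Submodule.eq_top_of_finrank_eq
    rw [show Submodule.span ℂ (Set.range Mᵀ) = Submodule.span ℂ (Set.range M.col) from rfl,
      ← Matrix.rank_eq_finrank_span_cols, hrank, Module.finrank_fin_fun]
  obtain ⟨b, hbsub, hbspan, hbind⟩ := exists_linearIndependent ℂ (Set.range Mᵀ)
  rw [hspan] at hbspan
  have hbfin : b.Finite := hbind.setFinite
  haveI := hbfin.fintype
  have hbasis : Module.Basis b ℂ (Fin k → ℂ) :=
    Module.Basis.mk hbind (by rw [Subtype.range_coe, hbspan])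
  have hbcard : Fintype.card b = k := by
    rw [← Module.finrank_eq_card_basis hbasis, Module.finrank_fin_fun]
  have hcol : ∀ w : b, ∃ I : T, Mᵀ I = w := fun w => hbsub w.2
  choose φ hφ using hcol
  have hφinj : Function.Injective φ := fun w w' hww =>
    Subtype.ext (by rw [← hφ w, ← hφ w', hww])
  have hinj2 : Function.Injective fun w : b => (φ w).1 := fun w w' hww =>
    hφinj (Subtype.ext hww)
  set S : Finset (Fin (n+1) →₀ ℕ) := Finset.univ.image (fun w : b => (φ w).1) with hS
  have hScard : S.card = k := by
    rw [hS, Finset.card_image_of_injective _ hinj2, Finset.card_univ, hbcard]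
  refine ⟨S, ?_, hScard, ?_⟩
  · intro I hI
    obtain ⟨w, -, rfl⟩ := Finset.mem_image.1 hI
    have hIT : (φ w).1 ∈ T := (φ w).2
    obtain ⟨i, -, hsupp⟩ := Finset.mem_biUnion.1 hIT
    have hdeg : ((φ w).1 : Fin (n+1) →₀ ℕ).degree = d := by
      by_contra hne
      exact MvPolynomial.mem_support_iff.1 hsupp ((hhom i).coeff_eq_zero hne)
    rw [← hdeg, Finsupp.degree]
    exact (Finset.sum_subset (Finset.subset_univ _)
      (fun j _ hj => Finsupp.notMem_support_iff.1 hj)).symm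
  · refine det_ne_zero_of_cols S hScard f ?_
    -- columns over S are linearly independent
    have hψbij : Function.Bijective (fun w : b => (⟨(φ w).1,
        Finset.mem_image.2 ⟨w, Finset.mem_univ w, rfl⟩⟩ : S)) := by
      constructor
      · intro w w' hww
        simp only [Subtype.mk.injEq] at hww
        exact hinj2 hww
      · rintro ⟨I, hI⟩
        obtain ⟨w, -, hw⟩ := Finset.mem_image.1 hI
        exact ⟨w, Subtype.ext hw⟩
    set ψ : b ≃ S := Equiv.ofBijective _ hψbij with hψ
    have hcomp : (fun I : S => fun i => MvPolynomial.coeff I.1 (f i)) ∘ ψ =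
        (fun w : b => (w : Fin k → ℂ)) := by
      funext w
      have : (fun i => MvPolynomial.coeff ((φ w).1 : Fin (n+1) →₀ ℕ) (f i)) = Mᵀ (φ w) := by
        funext i; rfl
      calc (fun i => MvPolynomial.coeff ((ψ w).1 : Fin (n+1) →₀ ℕ) (f i))
          = Mᵀ (φ w) := this
        _ = (w : Fin k → ℂ) := hφ w
    exact (linearIndependent_equiv ψ).1 (by rw [hcomp]; exact hbind)

end AuxLemmas

/-- For a linear system `𝒯` spanned by `k` linearly independent degree-`d`
forms, a normalized one-parameter subgroup `a`, and linearly independent members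
`g_1,…,g_k` of `𝒯`, one has `0 ≤ ω(g_i,a) ≤ Σ_l ω(g_l,a) ≤ ω(𝒯,a)` for every `i`. -/
theorem omega_members_le_omega_tuple (n d k : ℕ) (hn : 1 ≤ n) (hd : 1 ≤ d) (hk : 1 ≤ k)
    (f : Fin k → MvPolynomial (Fin (n+1)) ℂ)
    (hhom : ∀ i, (f i).IsHomogeneous d)
    (hind : LinearIndependent ℂ f)
    (a : Fin (n+1) → ℤ) (ha : Normalized n a)
    (g : Fin k → MvPolynomial (Fin (n+1)) ℂ)
    (hgind : LinearIndependent ℂ g)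
    (hgmem : ∀ i, g i ∈ Submodule.span ℂ (Set.range f)) :
    ∀ i, 0 ≤ omegaF n a (g i) ∧
      omegaF n a (g i) ≤ ∑ l, omegaF n a (g l) ∧
      ∑ l, omegaF n a (g l) ≤ omegaT n d k a f := by
  classical
  have haA : Antitone a := ha.1
  have hgne : ∀ i, g i ≠ 0 := fun i => hgind.ne_zero i
  have h0 : ∀ l, 0 ≤ omegaF n a (g l) := fun l => omegaF_nonneg' haA (hgne l)
  have hsum_le : ∑ l, omegaF n a (g l) ≤ omegaT n d k a f := by
    obtain ⟨S₀, hS₀⟩ := exists_inPlucker n d k f hhom hind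
    refine le_csInf ⟨_, S₀, hS₀, rfl⟩ ?_
    rintro x ⟨S, ⟨hdeg, h, hdet⟩, rfl⟩
    choose Cc hCc using fun i => (Submodule.mem_span_range_iff_exists_fun ℂ).1 (hgmem i)
    set e : Fin k → (Fin (n+1) →₀ ℕ) :=
      fun j => (S.equivFin.symm (Fin.cast h.symm j)).1 with he
    set F : Matrix (Fin k) (Fin k) ℂ :=
      Matrix.of (fun i j => MvPolynomial.coeff (e j) (f i)) with hF
    set G : Matrix (Fin k) (Fin k) ℂ :=
      Matrix.of (fun i j => MvPolynomial.coeff (e j) (g i)) with hG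
    have hGF : G = Matrix.of Cc * F := by
      ext i j
      have : MvPolynomial.coeff (e j) (g i)
          = MvPolynomial.coeff (e j) (∑ l, Cc i l • f l) := by rw [hCc i]
      rw [hG]
      show MvPolynomial.coeff (e j) (g i) = _
      rw [this, MvPolynomial.coeff_sum]
      rw [Matrix.mul_apply]
      refine Finset.sum_congr rfl fun l _ => ?_
      rw [MvPolynomial.coeff_smul, smul_eq_mul]
      rfl
    have hCdet : (Matrix.of Cc).det ≠ 0 := by
      intro h0'
      obtain ⟨v, hv0, hv⟩ := Matrix.exists_vecMul_eq_zero_iff.2 h0'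
      apply hv0
      have hz : ∑ i, v i • g i = 0 := by
        have expand : ∑ i, v i • g i = ∑ l, (Matrix.vecMul v (Matrix.of Cc)) l • f l := by
          simp_rw [← hCc, Finset.smul_sum, smul_smul]
          rw [Finset.sum_comm]
          refine Finset.sum_congr rfl fun l _ => ?_
          rw [← Finset.sum_smul]
          congr 1
        rw [expand, hv]
        simp
      have hall := Fintype.linearIndependent_iff.1 hgind v hz
      funext i
      exact hall i
    have hGdet : G.det ≠ 0 := by
      rw [hGF, Matrix.det_mul]
      exact mul_ne_zero hCdet hdet
    have hperm : ∃ σ : Equiv.Perm (Fin k), ∀ i, G (σ i) i ≠ 0 := by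
      by_contra hcon
      push_neg at hcon
      apply hGdet
      rw [Matrix.det_apply]
      refine Finset.sum_eq_zero fun σ _ => ?_
      obtain ⟨i, hi⟩ := hcon σ
      have hzero : (∏ j, G (σ j) j) = 0 := Finset.prod_eq_zero (Finset.mem_univ i) hi
      rw [hzero, smul_zero]
    obtain ⟨σ, hσ⟩ := hperm
    have hle : ∀ i, omegaF n a (g (σ i)) ≤ wt n a (e i) := fun i =>
      omegaF_le' haA (MvPolynomial.mem_support_iff.2 (hσ i))
    calc ∑ l, omegaF n a (g l) = ∑ i, omegaF n a (g (σ i)) :=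
          (Equiv.sum_comp σ (fun l => omegaF n a (g l))).symm
      _ ≤ ∑ i, wt n a (e i) := Finset.sum_le_sum fun i _ => hle i
      _ = ∑ I ∈ S, wt n a I := by
          have h1 : ∑ i : Fin k, wt n a (e i)
              = ∑ j : Fin S.card, wt n a (S.equivFin.symm j).1 :=
            Equiv.sum_comp (finCongr h.symm) (fun j => wt n a (S.equivFin.symm j).1)
          have h2 : ∑ j : Fin S.card, wt n a (S.equivFin.symm j).1
              = ∑ I : S, wt n a I.1 :=
            Equiv.sum_comp S.equivFin.symm (fun I : S => wt n a I.1)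
          rw [h1, h2]
          exact Finset.sum_coe_sort S (wt n a)
  intro i
  exact ⟨h0 i, Finset.single_le_sum (fun l _ => h0 l) (Finset.mem_univ i), hsum_le⟩
end
end

section
/- Let 𝒯 be the linear system spanned by k linearly independent degree-d forms f_1,…,f_k in x_0,…,x_n over ℂ, let f be a member of 𝒯, and let a ∈ ℤ^{n+1} be a normalized one-parameter subgroup. Then there exist k−1 members g_1,…,g_{k−1} of 𝒯 such that ω(𝒯,a) = ω(f,a) + Σ_{i=1}^{k−1} ω(g_i,a). -/
noncomputable section

open Finset MvPolynomial

/-! ### Auxiliary machinery for the proof of `omega_tuple_decomposition` -/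

namespace OmegaDecompAux

open Matrix

variable {n : ℕ}

lemma omegaF_set_eq (a : Fin (n+1) → ℤ) (g : MvPolynomial (Fin (n+1)) ℂ) :
    {x : ℤ | ∃ I ∈ g.support, x = wt n a I} = ↑(g.support.image (wt n a)) := by
  ext x
  simp only [Set.mem_setOf_eq, Finset.coe_image, Set.mem_image, Finset.mem_coe]
  constructor
  · rintro ⟨I, hI, rfl⟩; exact ⟨I, hI, rfl⟩
  · rintro ⟨I, hI, rfl⟩; exact ⟨I, hI, rfl⟩

lemma omegaF_le (a : Fin (n+1) → ℤ) {g : MvPolynomial (Fin (n+1)) ℂ} {I : Fin (n+1) →₀ ℕ}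
    (hI : I ∈ g.support) : omegaF n a g ≤ wt n a I := by
  rw [omegaF, omegaF_set_eq]
  exact csInf_le (Finset.bddBelow _)
    (by simp only [Finset.coe_image, Set.mem_image, Finset.mem_coe]; exact ⟨I, hI, rfl⟩)

lemma omegaF_exists (a : Fin (n+1) → ℤ) {g : MvPolynomial (Fin (n+1)) ℂ} (hg : g ≠ 0) :
    ∃ I ∈ g.support, omegaF n a g = wt n a I := by
  have hne : ((g.support.image (wt n a) : Finset ℤ) : Set ℤ).Nonempty := by
    rw [Finset.coe_nonempty]
    exact Finset.image_nonempty.2 (MvPolynomial.support_nonempty.2 hg)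
  have h := hne.csInf_mem (Finset.finite_toSet _)
  rw [omegaF, omegaF_set_eq]
  rw [Finset.mem_coe, Finset.mem_image] at h
  obtain ⟨I, hI, hw⟩ := h
  exact ⟨I, hI, hw.symm⟩

/-- The coefficient function of the initial (lowest-weight) part of a form. -/
def inC (a : Fin (n+1) → ℤ) (g : MvPolynomial (Fin (n+1)) ℂ) (I : Fin (n+1) →₀ ℕ) : ℂ :=
  if wt n a I = omegaF n a g then MvPolynomial.coeff I g else 0

lemma exists_perm_of_det_ne_zero {k : ℕ} (M : Matrix (Fin k) (Fin k) ℂ) (h : M.det ≠ 0) :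
    ∃ σ : Equiv.Perm (Fin k), ∀ i, M i (σ i) ≠ 0 := by
  by_contra hc
  push_neg at hc
  apply h
  rw [Matrix.det_apply]
  refine Finset.sum_eq_zero fun σ _ => ?_
  obtain ⟨i, hi⟩ := hc σ⁻¹
  have h0 : M (σ (σ⁻¹ i)) (σ⁻¹ i) = 0 := by rw [show σ (σ⁻¹ i) = i from σ.apply_symm_apply i]; exact hi
  have hp : (∏ j, M (σ j) j) = 0 := Finset.prod_eq_zero (Finset.mem_univ (σ⁻¹ i)) h0
  rw [hp, smul_zero]

lemma exists_cols {k : ℕ} {m : Type*} [Fintype m] [DecidableEq m]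
    (A : Matrix (Fin k) m ℂ) (h : LinearIndependent ℂ (fun i => A i)) :
    ∃ g : Fin k → m, Function.Injective g ∧ (A.submatrix id g).det ≠ 0 := by
  classical
  have hrank : A.rank = k := by simpa using h.rank_matrix
  have hspan : Submodule.span ℂ (Set.range Aᵀ) = ⊤ := by
    apply Submodule.eq_top_of_finrank_eq
    rw [show Set.range Aᵀ = Set.range A.col from rfl, ← Matrix.rank_eq_finrank_span_cols, hrank]
    simp [Module.finrank_pi]
  obtain ⟨b, hbsub, hbspan, hbli⟩ := exists_linearIndependent ℂ (Set.range Aᵀ)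
  rw [hspan] at hbspan
  have hble : (⊤ : Submodule ℂ (Fin k → ℂ)) ≤
      Submodule.span ℂ (Set.range ((↑) : b → (Fin k → ℂ))) := by
    rw [Subtype.range_coe, hbspan]
  let B : Module.Basis b ℂ (Fin k → ℂ) := Module.Basis.mk hbli hble
  haveI : Finite b := hbli.finite
  haveI : Fintype b := Fintype.ofFinite _
  have hcard : Fintype.card b = k := by
    have h1 := Module.finrank_eq_card_basis B
    rw [Module.finrank_pi] at h1
    simpa using h1.symm
  let e : Fin k ≃ b := (Fintype.equivFinOfCardEq hcard).symm
  have hsel : ∀ j : Fin k, ∃ l : m, Aᵀ l = (e j : Fin k → ℂ) := fun j => hbsub (e j).2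
  choose g hg using hsel
  have hginj : Function.Injective g := by
    intro x y hxy
    apply e.injective
    apply Subtype.ext
    rw [← hg x, ← hg y, hxy]
  refine ⟨g, hginj, ?_⟩
  have hcols : LinearIndependent ℂ (fun j => (A.submatrix id g)ᵀ j) := by
    have : (fun j => (A.submatrix id g)ᵀ j) = fun j => ((e j : b) : Fin k → ℂ) := by
      funext j
      rw [← hg j]
      rfl
    rw [this]
    exact hbli.comp e e.injective
  have hu : IsUnit (A.submatrix id g) := Matrix.linearIndependent_cols_iff_isUnit.1 hcols
  have hdu : IsUnit (A.submatrix id g).det := (Matrix.isUnit_iff_isUnit_det _).1 hu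
  exact hdu.ne_zero

lemma det_reindex_ne_zero {k : ℕ} {X : Type*} (B : Fin k → X → ℂ) {e1 e2 : Fin k → X}
    (h2 : Function.Injective e2) (hr : Set.range e1 = Set.range e2)
    (hd : Matrix.det (Matrix.of fun i j => B i (e1 j)) ≠ 0) :
    Matrix.det (Matrix.of fun i j => B i (e2 j)) ≠ 0 := by
  have hex : ∀ j, ∃ j', e1 j' = e2 j := fun j => by
    have hmem : e2 j ∈ Set.range e1 := by rw [hr]; exact Set.mem_range_self j
    exact hmem
  choose σf hσf using hex
  have hinj : Function.Injective σf := fun x y hxy => h2 (by rw [← hσf, ← hσf, hxy])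
  let σ : Equiv.Perm (Fin k) := Equiv.ofBijective σf (Finite.injective_iff_bijective.1 hinj)
  have hEq : (Matrix.of fun i j => B i (e2 j)) =
      (Matrix.of fun i j => B i (e1 j)).submatrix id σ := by
    ext i j
    simp only [Matrix.submatrix_apply, Matrix.of_apply, id]
    rw [show σ j = σf j from rfl, hσf]
  rw [hEq, Matrix.det_permute']
  exact mul_ne_zero (by simp) hd

lemma sum_enum {k : ℕ} {X : Type*} (S : Finset X) (hc : S.card = k) (φ : X → ℤ) :
    ∑ I ∈ S, φ I = ∑ j : Fin k, φ ((S.equivFin.symm (Fin.cast hc.symm j)) : X) := by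
  rw [← Finset.sum_coe_sort S φ]
  rw [← Equiv.sum_comp S.equivFin.symm (fun x : S => φ (x : X))]
  exact (Fintype.sum_equiv (finCongr hc.symm) _ _ (fun j => rfl)).symm

lemma enum_inj {k : ℕ} {X : Type*} (S : Finset X) (hc : S.card = k) :
    Function.Injective (fun j : Fin k => ((S.equivFin.symm (Fin.cast hc.symm j)) : X)) := by
  intro x y hxy
  have := S.equivFin.symm.injective (Subtype.ext hxy)
  simpa [Fin.ext_iff] using this

lemma enum_range {k : ℕ} {X : Type*} (S : Finset X) (hc : S.card = k) :
    Set.range (fun j : Fin k => ((S.equivFin.symm (Fin.cast hc.symm j)) : X)) = ↑S := by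
  have : (fun j : Fin k => ((S.equivFin.symm (Fin.cast hc.symm j)) : X)) =
      (Subtype.val : S → X) ∘ ((finCongr hc.symm).trans S.equivFin.symm) := rfl
  rw [this, Set.range_comp, Equiv.range_eq_univ, Set.image_univ]
  ext x
  simp

lemma sum_eq_of_mem_support {d : ℕ} {g : MvPolynomial (Fin (n+1)) ℂ} (hg : g.IsHomogeneous d)
    {I : Fin (n+1) →₀ ℕ} (hI : I ∈ g.support) : (∑ j, I j) = d := by
  have h1 : (Finsupp.weight (1 : Fin (n+1) → ℕ)) I = d := hg (MvPolynomial.mem_support_iff.1 hI)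
  rw [show (1 : Fin (n+1) → ℕ) = fun _ => 1 from rfl, ← Finsupp.degree_eq_weight_one] at h1
  rw [← h1, Finsupp.degree]
  exact (Finset.sum_subset (Finset.subset_univ _) (fun j _ hj => by
    simpa using Finsupp.notMem_support_iff.1 hj)).symm

end OmegaDecompAux

open OmegaDecompAux

/-- For a linear system `𝒯` spanned by `k` linearly independent degree-`d`
forms, a member `F` of `𝒯`, and a normalized one-parameter subgroup `a`, there exist
`k−1` members `g_1,…,g_{k−1}` of `𝒯` with `ω(𝒯,a) = ω(F,a) + Σ_i ω(g_i,a)`. -/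
theorem omega_tuple_decomposition (n d k : ℕ) (hn : 1 ≤ n) (hd : 1 ≤ d) (hk : 1 ≤ k)
    (f : Fin k → MvPolynomial (Fin (n+1)) ℂ)
    (hhom : ∀ i, (f i).IsHomogeneous d)
    (hind : LinearIndependent ℂ f)
    (F : MvPolynomial (Fin (n+1)) ℂ) (hF0 : F ≠ 0)
    (hFmem : F ∈ Submodule.span ℂ (Set.range f))
    (a : Fin (n+1) → ℤ) (ha : Normalized n a) :
    ∃ g : Fin (k - 1) → MvPolynomial (Fin (n+1)) ℂ,
      (∀ i, g i ≠ 0 ∧ g i ∈ Submodule.span ℂ (Set.range f)) ∧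
      omegaT n d k a f = omegaF n a F + ∑ i, omegaF n a (g i) := by
  classical
  obtain ⟨m, rfl⟩ : ∃ m, k = m + 1 := ⟨k - 1, (Nat.succ_pred_eq_of_pos hk).symm⟩
  set V : Submodule ℂ (MvPolynomial (Fin (n+1)) ℂ) := Submodule.span ℂ (Set.range f) with hV
  have hVhom : ∀ g ∈ V, MvPolynomial.IsHomogeneous g d := by
    intro g hg
    have hle : V ≤ homogeneousSubmodule (Fin (n+1)) ℂ d := by
      rw [hV, Submodule.span_le]
      rintro _ ⟨i, rfl⟩
      exact hhom i
    exact hle hg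
  set T : Finset (Fin (n+1) →₀ ℕ) := Finset.univ.biUnion (fun i => (f i).support) with hT
  have hsuppV : ∀ g ∈ V, g.support ⊆ T := by
    intro g hg I hI
    obtain ⟨c, hc⟩ := (Submodule.mem_span_range_iff_exists_fun ℂ).1 hg
    rw [MvPolynomial.mem_support_iff] at hI
    by_contra hIT
    apply hI
    rw [← hc, MvPolynomial.coeff_sum]
    refine Finset.sum_eq_zero fun i _ => ?_
    rw [MvPolynomial.coeff_smul]
    have hz : MvPolynomial.coeff I (f i) = 0 := by
      by_contra hne
      exact hIT (Finset.mem_biUnion.2 ⟨i, Finset.mem_univ _, MvPolynomial.mem_support_iff.2 hne⟩)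
    rw [hz, smul_zero]
  -- existence of a linearly independent tuple in V starting with F
  have hex : ∃ h : Fin (m+1) → MvPolynomial (Fin (n+1)) ℂ,
      h 0 = F ∧ (∀ i, h i ∈ V) ∧ LinearIndependent ℂ h := by
    haveI : FiniteDimensional ℂ V := FiniteDimensional.span_of_finite ℂ (Set.finite_range f)
    have hfr : Module.finrank ℂ V = m + 1 := by
      rw [hV, finrank_span_eq_card hind]
      simp
    set x : V := ⟨F, hFmem⟩ with hx
    have hx0 : x ≠ 0 := fun hzz => hF0 (by simpa [hx, Subtype.ext_iff] using hzz)
    have hxli : LinearIndependent ℂ ((↑) : ({x} : Set V) → V) := LinearIndepOn.singleton (v := id) hx0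
    obtain ⟨b, _, hxb, hbsp, hbli'⟩ := exists_linearIndepOn_id_extension hxli (Set.subset_univ _)
    have hbli : LinearIndependent ℂ ((↑) : b → V) := hbli'
    have hbtop : ⊤ ≤ Submodule.span ℂ (Set.range ((↑) : b → V)) := by
      rw [Subtype.range_coe]
      intro y _
      exact hbsp (Set.mem_univ y)
    let B : Module.Basis b ℂ V := Module.Basis.mk hbli hbtop
    haveI : Finite b := hbli.finite
    haveI : Fintype b := Fintype.ofFinite _
    have hcard : Fintype.card b = m + 1 := by rw [← Module.finrank_eq_card_basis B, hfr]
    let e : Fin (m+1) ≃ b := (Fintype.equivFinOfCardEq hcard).symm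
    let i0 : Fin (m+1) := e.symm ⟨x, hxb rfl⟩
    let e' : Fin (m+1) ≃ b := (Equiv.swap 0 i0).trans e
    refine ⟨fun i => ((e' i : V) : MvPolynomial (Fin (n+1)) ℂ), ?_, ?_, ?_⟩
    · show (((e' 0 : b) : V) : MvPolynomial (Fin (n+1)) ℂ) = F
      have h0 : e' 0 = ⟨x, hxb rfl⟩ := by
        show e ((Equiv.swap 0 i0) 0) = _
        rw [Equiv.swap_apply_left]
        exact e.apply_symm_apply _
      rw [h0]
    · intro i; exact ((e' i : b) : V).2
    · have h1 : LinearIndependent ℂ (fun i : Fin (m+1) => ((e' i : b) : V)) :=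
        hbli.comp e' e'.injective
      exact h1.map' V.subtype (Submodule.ker_subtype V)
  have hTne : T.Nonempty := by
    obtain ⟨I, hI⟩ := MvPolynomial.support_nonempty.2 hF0
    exact ⟨I, hsuppV F hFmem hI⟩
  set M1 : ℤ := (T.image (wt n a)).max' (Finset.image_nonempty.2 hTne) with hM1
  have hub : ∀ g ∈ V, g ≠ 0 → omegaF n a g ≤ M1 := by
    intro g hg hg0
    obtain ⟨I, hI, hw⟩ := omegaF_exists a hg0
    rw [hw]
    exact Finset.le_max' _ _ (Finset.mem_image.2 ⟨I, hsuppV g hg hI, rfl⟩)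
  set P : ℤ → Prop := fun z =>
      ∃ h : Fin (m+1) → MvPolynomial (Fin (n+1)) ℂ,
        (h 0 = F ∧ (∀ i, h i ∈ V) ∧ LinearIndependent ℂ h) ∧ z = ∑ i, omegaF n a (h i)
    with hP
  have hbdd : ∃ bnd : ℤ, ∀ z : ℤ, P z → z ≤ bnd := by
    refine ⟨((m+1 : ℕ) : ℤ) * M1, ?_⟩
    rintro z ⟨h, ⟨h0, hmem, hli⟩, rfl⟩
    calc ∑ i, omegaF n a (h i) ≤ ∑ _i : Fin (m+1), M1 :=
          Finset.sum_le_sum fun i _ => hub _ (hmem i) (hli.ne_zero i)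
      _ = ((m+1 : ℕ) : ℤ) * M1 := by
          rw [Finset.sum_const, Finset.card_univ, Fintype.card_fin, nsmul_eq_mul]
  have hPinh : ∃ z, P z := ⟨∑ i, omegaF n a (hex.choose i), hex.choose, hex.choose_spec, rfl⟩
  obtain ⟨N, ⟨h, ⟨hc0, hmem, hli⟩, hNeq⟩, hmax⟩ := Int.exists_greatest_of_bdd hbdd hPinh
  have hne0 : ∀ i, h i ≠ 0 := fun i => hli.ne_zero i
  -- Step 1: the initial parts of `h` are linearly independent (by maximality)
  have hinli : LinearIndependent ℂ (fun i => inC a (h i)) := by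
    by_contra hdep
    obtain ⟨c, hcrel, i₀, hci₀⟩ := Fintype.not_linearIndependent_iff.1 hdep
    set J' : Finset (Fin (m+1)) := Finset.univ.filter (fun i => c i ≠ 0) with hJ'
    have hJ'ne : J'.Nonempty := ⟨i₀, by simp [hJ', hci₀]⟩
    set t : ℤ := (J'.image (fun i => omegaF n a (h i))).min' (Finset.image_nonempty.2 hJ'ne)
      with ht
    have htle : ∀ i, c i ≠ 0 → t ≤ omegaF n a (h i) := fun i hi =>
      Finset.min'_le _ _ (Finset.mem_image.2 ⟨i, by simp [hJ', hi], rfl⟩)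
    obtain ⟨imin, himin, htmin⟩ := Finset.mem_image.1
      ((J'.image (fun i => omegaF n a (h i))).min'_mem (Finset.image_nonempty.2 hJ'ne))
    set J : Finset (Fin (m+1)) :=
      Finset.univ.filter (fun i => c i ≠ 0 ∧ omegaF n a (h i) = t) with hJ
    have hJne : J.Nonempty := by
      refine ⟨imin, ?_⟩
      rw [hJ, Finset.mem_filter]
      exact ⟨Finset.mem_univ _, by simpa [hJ'] using himin, htmin⟩
    set v : MvPolynomial (Fin (n+1)) ℂ := ∑ i ∈ J, c i • h i with hv
    have hvV : v ∈ V := Submodule.sum_mem _ fun i _ => Submodule.smul_mem _ _ (hmem i)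
    have hv0 : v ≠ 0 := by
      intro h0
      have hzero : ∀ i, (if i ∈ J then c i else 0) = 0 := by
        apply Fintype.linearIndependent_iff.1 hli
        have hrw : ∑ i, (if i ∈ J then c i else 0) • h i = ∑ i ∈ J, c i • h i := by
          simp only [ite_smul, zero_smul]
          rw [Finset.sum_ite_mem, Finset.univ_inter]
        rw [hrw, ← hv, h0]
      obtain ⟨j0, hj0⟩ := hJne
      have := hzero j0
      rw [if_pos hj0] at this
      exact (Finset.mem_filter.1 hj0).2.1 this
    have hvcoeff : ∀ I, MvPolynomial.coeff I v ≠ 0 → t < wt n a I := by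
      intro I hcI
      by_contra hle
      push_neg at hle
      apply hcI
      rw [hv, MvPolynomial.coeff_sum]
      rcases hle.lt_or_eq with hlt | heq
      · refine Finset.sum_eq_zero fun i hi => ?_
        rw [MvPolynomial.coeff_smul]
        have hz : MvPolynomial.coeff I (h i) = 0 := by
          by_contra hne
          have h1 : omegaF n a (h i) ≤ wt n a I :=
            omegaF_le a (MvPolynomial.mem_support_iff.2 hne)
          have h2 : omegaF n a (h i) = t := (Finset.mem_filter.1 hi).2.2
          omega
        rw [hz, smul_zero]
      · have hrel := congrFun hcrel I
        simp only [Finset.sum_apply, Pi.smul_apply, smul_eq_mul, Pi.zero_apply] at hrel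
        calc ∑ i ∈ J, MvPolynomial.coeff I (c i • h i)
            = ∑ i ∈ J, c i * inC a (h i) I := by
              refine Finset.sum_congr rfl fun i hi => ?_
              rw [MvPolynomial.coeff_smul, smul_eq_mul, inC,
                if_pos (by rw [heq, (Finset.mem_filter.1 hi).2.2])]
          _ = ∑ i, c i * inC a (h i) I := by
              refine Finset.sum_subset (Finset.subset_univ J) fun i _ hiJ => ?_
              by_cases hci : c i = 0
              · rw [hci, zero_mul]
              · have hnt : omegaF n a (h i) ≠ t := fun hcon => hiJ (by
                  rw [hJ, Finset.mem_filter]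
                  exact ⟨Finset.mem_univ _, hci, hcon⟩)
                rw [inC, if_neg (by rw [heq]; exact fun hcon2 => hnt hcon2.symm), mul_zero]
          _ = 0 := hrel
    have hvt : t < omegaF n a v := by
      obtain ⟨I, hI, hw⟩ := omegaF_exists a hv0
      rw [hw]
      exact hvcoeff I (MvPolynomial.mem_support_iff.1 hI)
    have hjex : ∃ j ∈ J, j ≠ 0 := by
      by_contra hcon
      push_neg at hcon
      obtain ⟨j0, hj0⟩ := hJne
      have hJeq : J = {0} := Finset.eq_singleton_iff_unique_mem.2
        ⟨(hcon j0 hj0) ▸ hj0, fun x hx => hcon x hx⟩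
      have h0J : (0 : Fin (m+1)) ∈ J := hJeq ▸ Finset.mem_singleton_self 0
      obtain ⟨hc00, hw0⟩ := (Finset.mem_filter.1 h0J).2
      have hveq : v = c 0 • h 0 := by rw [hv, hJeq, Finset.sum_singleton]
      obtain ⟨I, hI, hwI⟩ := omegaF_exists a (hne0 0)
      have hcIv : MvPolynomial.coeff I v ≠ 0 := by
        rw [hveq, MvPolynomial.coeff_smul, smul_eq_mul]
        exact mul_ne_zero hc00 (MvPolynomial.mem_support_iff.1 hI)
      have hlev := omegaF_le a (MvPolynomial.mem_support_iff.2 hcIv)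
      omega
    obtain ⟨j, hjJ, hj0⟩ := hjex
    obtain ⟨hcj, hwj⟩ := (Finset.mem_filter.1 hjJ).2
    set h' : Fin (m+1) → MvPolynomial (Fin (n+1)) ℂ := Function.update h j v with hh'
    have hh'0 : h' 0 = F := by rw [hh', Function.update_of_ne (Ne.symm hj0), hc0]
    have hmem' : ∀ i, h' i ∈ V := by
      intro i
      rcases eq_or_ne i j with rfl | hij
      · rw [hh']; simp only [Function.update_self]; exact hvV
      · rw [hh', Function.update_of_ne hij]; exact hmem i
    have hli' : LinearIndependent ℂ h' := by
      rw [Fintype.linearIndependent_iff]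
      intro g' hg'
      have hsum : ∑ i, g' i • h' i =
          (∑ i ∈ Finset.univ.erase j, g' i • h i) + g' j • v := by
        rw [hh']
        rw [← Finset.add_sum_erase _ (fun i => g' i • Function.update h j v i)
          (Finset.mem_univ j)]
        simp only [Function.update_self]
        have hrw : ∑ i ∈ Finset.univ.erase j, g' i • Function.update h j v i
            = ∑ i ∈ Finset.univ.erase j, g' i • h i :=
          Finset.sum_congr rfl fun i hi => by
            rw [Function.update_of_ne (Finset.ne_of_mem_erase hi)]
        rw [hrw]
        exact add_comm _ _
      have hA : ∑ i, (if i = j then (0:ℂ) else g' i) • h i =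
          ∑ i ∈ Finset.univ.erase j, g' i • h i := by
        rw [← Finset.add_sum_erase _ _ (Finset.mem_univ j), if_pos rfl, zero_smul, zero_add]
        exact Finset.sum_congr rfl fun i hi => by rw [if_neg (Finset.ne_of_mem_erase hi)]
      have hB : ∑ i, (if i ∈ J then g' j * c i else 0) • h i = g' j • v := by
        simp only [ite_smul, zero_smul]
        rw [Finset.sum_ite_mem, Finset.univ_inter, hv, Finset.smul_sum]
        exact Finset.sum_congr rfl fun i _ => mul_smul _ _ _
      have hEcomb : ∑ i, ((if i = j then (0:ℂ) else g' i)
          + (if i ∈ J then g' j * c i else 0)) • h i = 0 := by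
        simp only [add_smul]
        rw [Finset.sum_add_distrib, hA, hB, ← hsum, hg']
      have he := Fintype.linearIndependent_iff.1 hli _ hEcomb
      have hgj : g' j = 0 := by
        have hej := he j
        rw [if_pos rfl, if_pos hjJ, zero_add] at hej
        rcases mul_eq_zero.1 hej with h1 | h2
        · exact h1
        · exact absurd h2 hcj
      intro i
      rcases eq_or_ne i j with rfl | hij
      · exact hgj
      · have hei := he i
        rw [if_neg hij] at hei
        by_cases hiJ : i ∈ J
        · rw [if_pos hiJ, hgj, zero_mul, add_zero] at hei; exact hei
        · rw [if_neg hiJ, add_zero] at hei; exact hei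
    have hsum' : ∑ i, omegaF n a (h' i)
        = (∑ i, omegaF n a (h i)) - omegaF n a (h j) + omegaF n a v := by
      rw [hh']
      rw [← Finset.add_sum_erase _ (fun i => omegaF n a (Function.update h j v i))
        (Finset.mem_univ j)]
      rw [← Finset.add_sum_erase _ (fun i => omegaF n a (h i)) (Finset.mem_univ j)]
      simp only [Function.update_self]
      have hrest : ∑ i ∈ Finset.univ.erase j, omegaF n a (Function.update h j v i)
          = ∑ i ∈ Finset.univ.erase j, omegaF n a (h i) :=
        Finset.sum_congr rfl fun i hi => by rw [Function.update_of_ne (Finset.ne_of_mem_erase hi)]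
      rw [hrest]
      ring
    have hle' := hmax _ ⟨h', ⟨hh'0, hmem', hli'⟩, rfl⟩
    rw [hsum'] at hle'
    omega
  -- Step 2: `omegaT` equals the sum of the weights of `h`
  have hsinf : omegaT n d (m+1) a f = ∑ i, omegaF n a (h i) := by
    have hPex : ∀ i, ∃ cf : Fin (m+1) → ℂ, ∑ l, cf l • f l = h i := fun i =>
      (Submodule.mem_span_range_iff_exists_fun ℂ).1 (hmem i)
    choose Pc hPc using hPex
    set Pm : Matrix (Fin (m+1)) (Fin (m+1)) ℂ := Matrix.of (fun i l => Pc i l) with hPm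
    have hfac : ∀ e : Fin (m+1) → (Fin (n+1) →₀ ℕ),
        (Matrix.of fun i j => MvPolynomial.coeff (e j) (h i)) =
          Pm * (Matrix.of fun i j => MvPolynomial.coeff (e j) (f i)) := by
      intro e
      ext i j
      rw [Matrix.mul_apply]
      simp only [Matrix.of_apply]
      rw [← hPc i, MvPolynomial.coeff_sum]
      exact Finset.sum_congr rfl fun l _ => by
        rw [MvPolynomial.coeff_smul, smul_eq_mul]
        rfl
    have hdetP : Pm.det ≠ 0 := by
      intro h0
      obtain ⟨cvec, hcv0, hcv⟩ := Matrix.exists_vecMul_eq_zero_iff.2 h0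
      have hzero : ∑ i, cvec i • h i = 0 := by
        calc ∑ i, cvec i • h i = ∑ i, ∑ l, (cvec i * Pc i l) • f l := by
              refine Finset.sum_congr rfl fun i _ => ?_
              rw [← hPc i, Finset.smul_sum]
              exact Finset.sum_congr rfl fun l _ => (mul_smul _ _ _).symm
          _ = ∑ l, (∑ i, cvec i * Pc i l) • f l := by
              rw [Finset.sum_comm]
              exact Finset.sum_congr rfl fun l _ => (Finset.sum_smul).symm
          _ = 0 := by
              refine Finset.sum_eq_zero fun l _ => ?_
              have : Matrix.vecMul cvec Pm l = 0 := by rw [hcv]; rfl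
              rw [show (∑ i, cvec i * Pc i l) = Matrix.vecMul cvec Pm l from rfl, this, zero_smul]
      have := Fintype.linearIndependent_iff.1 hli cvec hzero
      exact hcv0 (funext this)
    have hlb : ∀ x ∈ {x : ℤ | ∃ S, InPlucker n d (m+1) f S ∧ x = ∑ I ∈ S, wt n a I},
        (∑ i, omegaF n a (h i)) ≤ x := by
      rintro x ⟨S, ⟨hSdeg, hScard, hSdet⟩, rfl⟩
      have hdet2 : (Matrix.of fun i j =>
          MvPolynomial.coeff ((S.equivFin.symm (Fin.cast hScard.symm j)) : Fin (n+1) →₀ ℕ)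
            (h i)).det ≠ 0 := by
        rw [hfac, Matrix.det_mul]
        exact mul_ne_zero hdetP hSdet
      obtain ⟨σ, hσ⟩ := exists_perm_of_det_ne_zero _ hdet2
      rw [sum_enum S hScard (wt n a)]
      rw [← Equiv.sum_comp σ
        (fun j => wt n a ((S.equivFin.symm (Fin.cast hScard.symm j)) : Fin (n+1) →₀ ℕ))]
      refine Finset.sum_le_sum fun i _ => ?_
      exact omegaF_le a (MvPolynomial.mem_support_iff.2 (hσ i))
    -- upper bound: construct a Plücker set from the initial parts
    have hTli : LinearIndependent ℂ
        (fun i => (fun J : T => inC a (h i) (J : Fin (n+1) →₀ ℕ))) := by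
      rw [Fintype.linearIndependent_iff]
      intro c hcc
      have hall : ∑ i, c i • inC a (h i) = 0 := by
        funext I
        simp only [Finset.sum_apply, Pi.smul_apply, smul_eq_mul, Pi.zero_apply]
        by_cases hIT : I ∈ T
        · have := congrFun hcc ⟨I, hIT⟩
          simpa using this
        · refine Finset.sum_eq_zero fun i _ => ?_
          have hz : inC a (h i) I = 0 := by
            rw [inC]
            by_cases hw : wt n a I = omegaF n a (h i)
            · rw [if_pos hw]
              by_contra hne
              exact hIT (hsuppV _ (hmem i) (MvPolynomial.mem_support_iff.2 hne))
            · rw [if_neg hw]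
          rw [hz, mul_zero]
      exact fun i => Fintype.linearIndependent_iff.1 hinli c hall i
    obtain ⟨g0, hg0inj, hg0det⟩ :=
      exists_cols (Matrix.of (fun i (J : T) => inC a (h i) (J : Fin (n+1) →₀ ℕ))) hTli
    set e0 : Fin (m+1) → (Fin (n+1) →₀ ℕ) := fun j => ((g0 j : T) : Fin (n+1) →₀ ℕ) with he0
    have he0inj : Function.Injective e0 := fun x y hxy => hg0inj (Subtype.ext hxy)
    set S0 : Finset (Fin (n+1) →₀ ℕ) := Finset.univ.image e0 with hS0
    have hS0card : S0.card = m+1 := by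
      rw [hS0, Finset.card_image_of_injective _ he0inj, Finset.card_univ, Fintype.card_fin]
    have hS0range : Set.range e0 = ↑S0 := by
      rw [hS0]
      ext x
      simp
    have hMin : (Matrix.of fun i j => inC a (h i) (e0 j)).det ≠ 0 := hg0det
    obtain ⟨σ0, hσ0⟩ := exists_perm_of_det_ne_zero _ hMin
    have hσ0w : ∀ i, wt n a (e0 (σ0 i)) = omegaF n a (h i)
        ∧ MvPolynomial.coeff (e0 (σ0 i)) (h i) ≠ 0 := by
      intro i
      have hne := hσ0 i
      simp only [Matrix.of_apply, inC] at hne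
      by_cases hw : wt n a (e0 (σ0 i)) = omegaF n a (h i)
      · rw [if_pos hw] at hne
        exact ⟨hw, hne⟩
      · rw [if_neg hw] at hne
        exact absurd rfl hne
    have hsume0 : ∑ I ∈ S0, wt n a I = ∑ j, wt n a (e0 j) := by
      rw [hS0]
      exact Finset.sum_image fun x _ y _ hxy => he0inj hxy
    have hsumS0 : ∑ I ∈ S0, wt n a I = ∑ i, omegaF n a (h i) := by
      rw [hsume0, ← Equiv.sum_comp σ0 (fun j => wt n a (e0 j))]
      exact Finset.sum_congr rfl fun i _ => (hσ0w i).1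
    have hMh : (Matrix.of fun i j => MvPolynomial.coeff (e0 j) (h i)).det ≠ 0 := by
      have hdetEq : (Matrix.of fun i j => MvPolynomial.coeff (e0 j) (h i)).det
          = (Matrix.of fun i j => inC a (h i) (e0 j)).det := by
        rw [Matrix.det_apply, Matrix.det_apply]
        refine Finset.sum_congr rfl fun σ _ => ?_
        congr 1
        by_cases hallw : ∀ i, wt n a (e0 i) = omegaF n a (h (σ i))
        · refine Finset.prod_congr rfl fun i _ => ?_
          simp only [Matrix.of_apply]
          rw [inC, if_pos (hallw i)]
        · push_neg at hallw
          obtain ⟨i1, hi1⟩ := hallw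
          have hex2 : ∃ i2, wt n a (e0 i2) < omegaF n a (h (σ i2)) := by
            by_contra hcon
            push_neg at hcon
            have hs1 : ∑ i, wt n a (e0 i) = ∑ i, omegaF n a (h (σ i)) := by
              rw [Equiv.sum_comp σ (fun i => omegaF n a (h i)), ← hsumS0, hsume0]
            have hstrict : omegaF n a (h (σ i1)) < wt n a (e0 i1) :=
              lt_of_le_of_ne (hcon i1) fun hcc => hi1 hcc.symm
            have hslt := Finset.sum_lt_sum (fun i (_ : i ∈ Finset.univ) => hcon i)
              ⟨i1, Finset.mem_univ _, hstrict⟩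
            omega
          obtain ⟨i2, hi2⟩ := hex2
          have hz1 : MvPolynomial.coeff (e0 i2) (h (σ i2)) = 0 := by
            by_contra hne
            exact absurd (omegaF_le a (MvPolynomial.mem_support_iff.2 hne)) (not_le.2 hi2)
          have hz2 : inC a (h (σ i2)) (e0 i2) = 0 := by
            rw [inC, if_neg (ne_of_lt hi2)]
          rw [Finset.prod_eq_zero (Finset.mem_univ i2)
              (by simp only [Matrix.of_apply]; exact hz1),
            Finset.prod_eq_zero (Finset.mem_univ i2)
              (by simp only [Matrix.of_apply]; exact hz2)]
      rw [hdetEq]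
      exact hMin
    have hMf : (Matrix.of fun i j => MvPolynomial.coeff (e0 j) (f i)).det ≠ 0 := by
      intro h0
      apply hMh
      rw [hfac e0, Matrix.det_mul, h0, mul_zero]
    have hPluS0 : InPlucker n d (m+1) f S0 := by
      constructor
      · intro I hI
        rw [hS0, Finset.mem_image] at hI
        obtain ⟨j, _, rfl⟩ := hI
        have hcne := (hσ0w (σ0.symm j)).2
        rw [Equiv.apply_symm_apply] at hcne
        exact sum_eq_of_mem_support (hVhom _ (hmem _)) (MvPolynomial.mem_support_iff.2 hcne)
      · refine ⟨hS0card, ?_⟩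
        exact det_reindex_ne_zero (fun i I => MvPolynomial.coeff I (f i))
          (enum_inj S0 hS0card) (by rw [hS0range, enum_range S0 hS0card]) hMf
    have hNin : (∑ i, omegaF n a (h i)) ∈
        {x : ℤ | ∃ S, InPlucker n d (m+1) f S ∧ x = ∑ I ∈ S, wt n a I} :=
      ⟨S0, hPluS0, hsumS0.symm⟩
    rw [omegaT]
    exact le_antisymm (csInf_le ⟨_, fun x hx => hlb x hx⟩ hNin) (le_csInf ⟨_, hNin⟩ hlb)
  refine ⟨fun i => h i.succ, fun i => ⟨hne0 _, hmem _⟩, ?_⟩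
  rw [hsinf, ← hc0]
  exact Fin.sum_univ_succ _
end
end
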